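/- In the Brandt semigroup B_n, for nonzero b = (b¹,b²), d = (d¹,d²): the equation x² = b·x·d has exactly n² − n + 2 solutions if b² = d¹ and b¹ = d² = b²; exactly n² − n + 1 solutions if b² = d¹ but not (b¹ = d² = b²); and exactly n² − n solutions if b² ≠ d¹. -/

import Mathlib

/-!
A nonzero `x = (i, j)` has `x² = 0` unless `i = j`, while `b·x·d ≠ 0` exactly when
`x = (b², d¹)`. So the solutions are `0`, the off-diagonal pairs other than `(b², d¹)`, and
`(b², d¹)` itself when `b = d` is that diagonal idempotent; it remains to count off-diagonal pairs.
-/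

/-- The Brandt semigroup `B_n`: `none` is the zero element `0`, and
`some (i, j)` is the element `(i, j)` with `i, j ∈ {1, …, n}` (as `Fin n`). -/
abbrev Brandt (n : ℕ) : Type := Option (Fin n × Fin n)

def bmul {n : ℕ} : Brandt n → Brandt n → Brandt n
  | some (e, k), some (l, m) => if k = l then some (e, m) else none
  | _, _ => none

open Finset

theorem card_offDiag_erase_add {α : Type*} [Fintype α] [DecidableEq α] (q : α × α) :
    #((univ : Finset α).offDiag.erase q) + (if q.1 = q.2 then 0 else 1) =
      Fintype.card α ^ 2 - Fintype.card α := by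
  rw [sq, ← card_univ, ← offDiag_card]
  split_ifs with hq
  · rw [erase_eq_of_notMem (by simp [hq]), add_zero]
  · exact card_erase_add_one (by simpa using hq)

theorem bmul_some_some {n : ℕ} (p q : Fin n × Fin n) :
    bmul (some p) (some q) = if p.2 = q.1 then some (p.1, q.2) else none := rfl

theorem bmul_none_left {n : ℕ} (x : Brandt n) : bmul none x = none := rfl

theorem bmul_none_right {n : ℕ} (x : Brandt n) : bmul x none = none := by
  cases x <;> rfl

theorem bmul_some_self_eq_sandwich_iff {n : ℕ} (b d p : Fin n × Fin n) :
    bmul (some p) (some p) = bmul (some b) (bmul (some p) (some d)) ↔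
      (p.1 ≠ p.2 ∧ p ≠ (b.2, d.1)) ∨
        (p = (b.2, d.1) ∧ b.2 = d.1 ∧ (b.1 = d.2 ∧ d.2 = b.2)) := by
  obtain ⟨b₁, b₂⟩ := b
  obtain ⟨d₁, d₂⟩ := d
  obtain ⟨i, j⟩ := p
  simp only [bmul_some_some]
  split_ifs <;> simp only [bmul_some_some, bmul_none_right] <;> grind

theorem card_sq_eq_sandwich {n : ℕ} (b d : Fin n × Fin n) :
    Nat.card {x : Brandt n // bmul x x = bmul (some b) (bmul x (some d))} =
      #((univ : Finset (Fin n)).offDiag.erase (b.2, d.1)) + 1 +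
        if b.2 = d.1 ∧ (b.1 = d.2 ∧ d.2 = b.2) then 1 else 0 := by
  set C := b.2 = d.1 ∧ (b.1 = d.2 ∧ d.2 = b.2)
  set T := (univ : Finset (Fin n)).offDiag.erase (b.2, d.1)
  have hq : C → (b.2, d.1) ∉ T := fun hC => by simp [T, hC.1]
  rw [Nat.subtype_card (insert none ((if C then insert (b.2, d.1) T else T).map .some))]
  · rw [card_insert_of_notMem (by simp), card_map]
    split_ifs with hC
    · rw [card_insert_of_notMem (hq hC)]
    · rfl
  · rintro (_ | p)
    · simp [bmul_none_left, bmul_none_right]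
    · rw [bmul_some_self_eq_sandwich_iff]
      split_ifs with hC <;> simp [T] <;> tauto

/-- Solutions of `x² = b·x·d` in `B_n` for nonzero `b, d`: exactly `n² − n + 2`
solutions if `b² = d¹` and `b¹ = d² = b²`; exactly `n² − n + 1` if `b² = d¹`
but not `b¹ = d² = b²`; and exactly `n² − n` if `b² ≠ d¹`. -/
theorem brandt_eq_sq_sandwich (n : ℕ) (b d : Fin n × Fin n) :
    (b.2 = d.1 ∧ (b.1 = d.2 ∧ d.2 = b.2) →
      Nat.card {x : Brandt n // bmul x x = bmul (some b) (bmul x (some d))} =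
        n ^ 2 + 2 - n) ∧
    (b.2 = d.1 ∧ ¬ (b.1 = d.2 ∧ d.2 = b.2) →
      Nat.card {x : Brandt n // bmul x x = bmul (some b) (bmul x (some d))} =
        n ^ 2 + 1 - n) ∧
    (b.2 ≠ d.1 →
      Nat.card {x : Brandt n // bmul x x = bmul (some b) (bmul x (some d))} =
        n ^ 2 - n) := by
  have hcard := card_sq_eq_sandwich b d
  have hoff := card_offDiag_erase_add (b.2, d.1)
  rw [Fintype.card_fin] at hoff
  have hn : n ≤ n ^ 2 := Nat.le_self_pow two_ne_zero n
  refine ⟨fun hC => ?_, fun hC => ?_, fun hbd => ?_⟩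
  · rw [if_pos hC] at hcard
    rw [if_pos hC.1] at hoff
    omega
  · rw [if_neg (fun h => hC.2 h.2)] at hcard
    rw [if_pos hC.1] at hoff
    omega
  · rw [if_neg (fun h => hbd h.1)] at hcard
    rw [if_neg hbd] at hoff
    omega
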